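/- Let R > 0, r > 0, t ≤ 0, and let (w,q) ∈ R^d × R satisfy: (i) q ≥ t, (ii) there exists (v',h') with ‖v'‖ ≤ R, h' ≥ t, and ‖w − v'‖ ≤ √(q − h'), and (iii) √(max((R+r)² − q, 0)) ≤ ‖w‖. Then q ≥ t + r²/2. -/
import Mathlib


/-- Apex-location estimate: a paraboloid apex touching the cylinder B_R × [t,∞) while
lying outside the hypograph of the paraboloid with apex (o,(R+r)²) has height at least
t + r²/2. -/
theorem stmt_18 {d : ℕ} (R r t q : ℝ) (hR : 0 < R) (hr : 0 < r) (ht : t ≤ 0)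
    (w : EuclideanSpace ℝ (Fin d)) (hq : t ≤ q)
    (htouch : ∃ (v' : EuclideanSpace ℝ (Fin d)) (h' : ℝ),
      ‖v'‖ ≤ R ∧ t ≤ h' ∧ ‖w - v'‖ ≤ Real.sqrt (q - h'))
    (hout : Real.sqrt (max ((R + r) ^ 2 - q) 0) ≤ ‖w‖) :
    t + r ^ 2 / 2 ≤ q := by
  by_contra hcon
  push_neg at hcon
  obtain ⟨v', h', hv, hh, hwv⟩ := htouch
  set s := Real.sqrt (q - t) with hsdef
  have hs0 : 0 ≤ s := Real.sqrt_nonneg _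
  have hs2 : s ^ 2 = q - t := Real.sq_sqrt (by linarith)
  have h1 : ‖w‖ ≤ R + s := by
    have : ‖w‖ ≤ ‖w - v'‖ + ‖v'‖ := by
      have := norm_add_le (w - v') v'
      simpa using this
    have hmono : Real.sqrt (q - h') ≤ s := Real.sqrt_le_sqrt (by linarith)
    linarith
  have hpos : 0 < (R + r) ^ 2 - q := by nlinarith
  have hmax : max ((R + r) ^ 2 - q) 0 = (R + r) ^ 2 - q := max_eq_left hpos.le
  rw [hmax] at hout
  have h2 : Real.sqrt ((R + r) ^ 2 - q) ≤ R + s := le_trans hout h1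
  have h3 : (R + r) ^ 2 - q ≤ (R + s) ^ 2 := by
    have := Real.sq_sqrt hpos.le
    nlinarith [Real.sqrt_nonneg ((R + r) ^ 2 - q)]
  nlinarith [sq_nonneg (r - s), sq_nonneg s, mul_pos hR hr]
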